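/- arXiv:math/0502367 — 2 statements merged into one kernel-verified Lean document; each statement's English description precedes it below -/
import Mathlib

section
/- Let X be a geodesic metric space, and suppose every geodesic triangle in X is degenerate in the sense that each side is contained in the union of the other two sides. Then X is uniquely geodesic and any two geodesics with the same endpoints coincide; moreover if X is in addition uniquely arcwise connected and locally path connected via its geodesics, then removing any interior point of a geodesic disconnects its endpoints. -/
def IsGeodesic {X : Type*} [MetricSpace X] (a b : X) (G : Set X) : Prop :=
  ∃ f : ℝ → X, f 0 = a ∧ f (dist a b) = b ∧
    (∀ s ∈ Set.Icc (0:ℝ) (dist a b), ∀ t ∈ Set.Icc (0:ℝ) (dist a b),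
      dist (f s) (f t) = |s - t|) ∧
    G = f '' Set.Icc (0:ℝ) (dist a b)

def GeodesicSpace (X : Type*) [MetricSpace X] : Prop :=
  ∀ a b : X, ∃ G : Set X, IsGeodesic a b G

/-- `A` is a topological arc from `a` to `b`. -/
def IsArc {X : Type*} [MetricSpace X] (a b : X) (A : Set X) : Prop :=
  ∃ f : ℝ → X, ContinuousOn f (Set.Icc 0 1) ∧ Set.InjOn f (Set.Icc 0 1) ∧
    f 0 = a ∧ f 1 = b ∧ A = f '' Set.Icc (0:ℝ) 1

lemma between_exists_geodesic {X : Type*} [MetricSpace X] (hgeo : GeodesicSpace X)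
    {a b p : X} (h : dist a p + dist p b = dist a b) :
    ∃ G : Set X, IsGeodesic a b G ∧ p ∈ G := by
  obtain ⟨G1, f, hf0, hf1, hfiso, hfim⟩ := hgeo a p
  obtain ⟨G2, g, hg0, hg1, hgiso, hgim⟩ := hgeo p b
  set d1 := dist a p with hd1
  set d2 := dist p b with hd2
  have hd1n : 0 ≤ d1 := dist_nonneg
  have hd2n : 0 ≤ d2 := dist_nonneg
  set F : ℝ → X := fun t => if t ≤ d1 then f t else g (t - d1) with hF
  -- values of F
  have hFle : ∀ t, t ≤ d1 → F t = f t := fun t ht => if_pos ht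
  have hFgt : ∀ t, d1 < t → F t = g (t - d1) := fun t ht => if_neg (not_le.mpr ht)
  have hFd1 : F d1 = p := by rw [hFle d1 le_rfl, hf1]
  -- key distance computations
  have hfa : ∀ s ∈ Set.Icc (0:ℝ) d1, dist a (f s) = s := by
    intro s hs
    have := hfiso 0 ⟨le_rfl, hd1n⟩ s hs
    rw [hf0] at this
    rw [this, abs_sub_comm, abs_of_nonneg (by linarith [hs.1])]; ring
  have hfp : ∀ s ∈ Set.Icc (0:ℝ) d1, dist (f s) p = d1 - s := by
    intro s hs
    have := hfiso s hs d1 ⟨hd1n, le_rfl⟩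
    rw [hf1] at this
    rw [this, abs_of_nonpos (by linarith [hs.2])]; ring
  have hgp : ∀ s ∈ Set.Icc (0:ℝ) d2, dist p (g s) = s := by
    intro s hs
    have := hgiso 0 ⟨le_rfl, hd2n⟩ s hs
    rw [hg0] at this
    rw [this, abs_sub_comm, abs_of_nonneg (by linarith [hs.1])]; ring
  have hgb : ∀ s ∈ Set.Icc (0:ℝ) d2, dist (g s) b = d2 - s := by
    intro s hs
    have := hgiso s hs d2 ⟨hd2n, le_rfl⟩
    rw [hg1] at this
    rw [this, abs_of_nonpos (by linarith [hs.2])]; ring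
  -- endpoint distances for F
  have hFa : ∀ s ∈ Set.Icc (0:ℝ) (dist a b), dist a (F s) = s := by
    intro s hs
    rcases le_or_gt s d1 with hc | hc
    · rw [hFle s hc, hfa s ⟨hs.1, hc⟩]
    · rw [hFgt s hc]
      have hs2 : s - d1 ∈ Set.Icc (0:ℝ) d2 := ⟨by linarith, by linarith [hs.2]⟩
      have hub : dist a (g (s - d1)) ≤ s := by
        calc dist a (g (s - d1)) ≤ dist a p + dist p (g (s - d1)) := dist_triangle _ _ _
        _ = d1 + (s - d1) := by rw [hgp _ hs2]
        _ = s := by ring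
      have hlb : s ≤ dist a (g (s - d1)) := by
        have := dist_triangle a (g (s - d1)) b
        rw [hgb _ hs2] at this
        linarith [h]
      linarith
  have hFb : ∀ s ∈ Set.Icc (0:ℝ) (dist a b), dist (F s) b = dist a b - s := by
    intro s hs
    rcases le_or_gt s d1 with hc | hc
    · rw [hFle s hc]
      have hs1 : s ∈ Set.Icc (0:ℝ) d1 := ⟨hs.1, hc⟩
      have hub : dist (f s) b ≤ dist a b - s := by
        calc dist (f s) b ≤ dist (f s) p + dist p b := dist_triangle _ _ _
        _ = (d1 - s) + d2 := by rw [hfp _ hs1]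
        _ = dist a b - s := by linarith [h]
      have hlb : dist a b - s ≤ dist (f s) b := by
        have := dist_triangle a (f s) b
        rw [hfa _ hs1] at this
        linarith
      linarith
    · rw [hFgt s hc]
      have hs2 : s - d1 ∈ Set.Icc (0:ℝ) d2 := ⟨by linarith, by linarith [hs.2]⟩
      rw [hgb _ hs2]; linarith
  -- main isometry property
  have key : ∀ s ∈ Set.Icc (0:ℝ) (dist a b), ∀ t ∈ Set.Icc (0:ℝ) (dist a b),
      s ≤ t → dist (F s) (F t) = t - s := by
    intro s hs t ht hst
    have hub : dist (F s) (F t) ≤ t - s := by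
      rcases le_or_gt t d1 with hc | hc
      · rw [hFle s (le_trans hst hc), hFle t hc]
        rw [hfiso s ⟨hs.1, le_trans hst hc⟩ t ⟨ht.1, hc⟩, abs_of_nonpos (by linarith)]
        linarith
      · rcases le_or_gt s d1 with hc' | hc'
        · rw [hFle s hc', hFgt t hc]
          have ht2 : t - d1 ∈ Set.Icc (0:ℝ) d2 := ⟨by linarith, by linarith [ht.2]⟩
          calc dist (f s) (g (t - d1)) ≤ dist (f s) p + dist p (g (t - d1)) :=
                dist_triangle _ _ _
          _ = (d1 - s) + (t - d1) := by rw [hfp s ⟨hs.1, hc'⟩, hgp _ ht2]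
          _ = t - s := by ring
        · rw [hFgt s hc', hFgt t hc]
          rw [hgiso (s - d1) ⟨by linarith, by linarith [hs.2]⟩ (t - d1)
            ⟨by linarith, by linarith [ht.2]⟩, abs_of_nonpos (by linarith)]
          linarith
    have hlb : t - s ≤ dist (F s) (F t) := by
      have h2 := dist_triangle a (F s) (F t)
      have h3 := dist_triangle a (F t) b
      have e1 := hFa s hs
      have e2 := hFb t ht
      linarith
    linarith
  refine ⟨F '' Set.Icc 0 (dist a b), ⟨F, ?_, ?_, ?_, rfl⟩, ?_⟩
  · rw [hFle 0 hd1n, hf0]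
  · rcases eq_or_lt_of_le hd2n with he | hlt
    · have hpb : p = b := by rw [← dist_eq_zero (x := p) (y := b), ← hd2, ← he]
      have : dist a b = d1 := by rw [← h, ← he]; ring
      rw [this, hFd1, hpb]
    · have : d1 < dist a b := by rw [← h]; linarith
      rw [hFgt _ this]
      have : dist a b - d1 = d2 := by rw [← h]; ring
      rw [this, hg1]
  · intro s hs t ht
    rcases le_total s t with hst | hst
    · rw [key s hs t ht hst, abs_of_nonpos (by linarith)]; ring
    · rw [dist_comm, key t ht s hs hst, abs_of_nonneg (by linarith)]
  · exact ⟨d1, ⟨hd1n, by rw [← h]; linarith⟩, hFd1⟩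

lemma dist_add_of_mem_geodesic {X : Type*} [MetricSpace X] {a b p : X} {G : Set X}
    (hG : IsGeodesic a b G) (hp : p ∈ G) : dist a p + dist p b = dist a b := by
  obtain ⟨f, hf0, hfd, hiso, him⟩ := hG
  rw [him] at hp
  obtain ⟨s, hs, rfl⟩ := hp
  have h0 : (0:ℝ) ∈ Set.Icc (0:ℝ) (dist a b) := ⟨le_refl _, dist_nonneg⟩
  have hd : dist a b ∈ Set.Icc (0:ℝ) (dist a b) := ⟨dist_nonneg, le_refl _⟩
  have h1 : dist (f 0) (f s) = s := by
    rw [hiso 0 h0 s hs, abs_sub_comm, abs_of_nonneg (by linarith [hs.1])]; ring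
  have h2 : dist (f s) (f (dist a b)) = dist a b - s := by
    rw [hiso s hs _ hd, abs_of_nonpos (by linarith [hs.2])]; ring
  rw [hf0] at h1; rw [hfd] at h2; rw [h1, h2]; ring

lemma between_trans {X : Type*} [MetricSpace X] (hgeo : GeodesicSpace X)
    (hdeg : ∀ a b c : X, ∀ Gab Gbc Gac : Set X,
      IsGeodesic a b Gab → IsGeodesic b c Gbc → IsGeodesic a c Gac →
      Gab ⊆ Gac ∪ Gbc)
    {p x y z : X}
    (hxy : dist x y < dist x p + dist p y)
    (hyz : dist y z < dist y p + dist p z) :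
    dist x z < dist x p + dist p z := by
  rcases lt_or_eq_of_le (dist_triangle x p z) with hlt | heq
  · exact hlt
  · exfalso
    obtain ⟨Gxz, hGxz, hpmem⟩ := between_exists_geodesic hgeo heq.symm
    obtain ⟨Gxy, hGxy⟩ := hgeo x y
    obtain ⟨Gzy, hGzy⟩ := hgeo z y
    have hsub := hdeg x z y Gxz Gzy Gxy hGxz hGzy hGxy
    rcases hsub hpmem with hmem | hmem
    · have := dist_add_of_mem_geodesic hGxy hmem
      linarith
    · have := dist_add_of_mem_geodesic hGzy hmem
      rw [dist_comm z y] at this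
      rw [dist_comm z p] at this
      rw [dist_comm p y] at this
      linarith

/-- If every geodesic triangle in a geodesic metric space `X` is degenerate (each side
lies in the union of the other two), then `X` is uniquely geodesic: any two geodesics
with the same endpoints coincide. Moreover, if in addition `X` is uniquely arcwise
connected, then removing any interior point of a geodesic disconnects its endpoints:
they are not joined by any path avoiding that point. -/
theorem degenerate_triangles_unique_geodesics {X : Type*} [MetricSpace X]
    (hgeo : GeodesicSpace X)
    (hdeg : ∀ a b c : X, ∀ Gab Gbc Gac : Set X,
      IsGeodesic a b Gab → IsGeodesic b c Gbc → IsGeodesic a c Gac →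
      Gab ⊆ Gac ∪ Gbc) :
    (∀ a b : X, ∀ G G' : Set X, IsGeodesic a b G → IsGeodesic a b G' → G = G') ∧
      ((∀ a b : X, a ≠ b → ∃! A : Set X, IsArc a b A) →
        ∀ a b : X, ∀ G : Set X, IsGeodesic a b G →
          ∀ p ∈ G, p ≠ a → p ≠ b → ¬ JoinedIn ({p}ᶜ : Set X) a b) := by
  constructor
  · -- uniqueness of geodesics
    have key : ∀ a b : X, ∀ G G' : Set X, IsGeodesic a b G → IsGeodesic a b G' → G ⊆ G' := by
      intro a b G G' hG hG'
      have htriv : IsGeodesic b b ({b} : Set X) := by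
        refine ⟨fun _ => b, rfl, rfl, ?_, ?_⟩
        · intro s hs t ht
          rw [dist_self] at hs ht
          have hs0 : s = 0 := le_antisymm hs.2 hs.1
          have ht0 : t = 0 := le_antisymm ht.2 ht.1
          simp [hs0, ht0]
        · rw [dist_self]
          have : Set.Icc (0:ℝ) 0 = {0} := Set.Icc_self 0
          rw [this, Set.image_singleton]
      have hbG' : b ∈ G' := by
        obtain ⟨f, hf0, hfd, hiso, him⟩ := hG'
        rw [him]
        exact ⟨dist a b, ⟨dist_nonneg, le_refl _⟩, hfd⟩
      have hsub := hdeg a b b G ({b} : Set X) G' hG htriv hG'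
      intro x hx
      rcases hsub hx with h | h
      · exact h
      · rw [Set.mem_singleton_iff] at h
        rw [h]; exact hbG'
    intro a b G G' hG hG'
    exact le_antisymm (key a b G G' hG hG') (key a b G' G hG' hG)
  · -- removing an interior point disconnects
    intro _ a b G hG p hpG hpa hpb hjoin
    obtain ⟨γ, hγ⟩ := hjoin
    have hab : dist a p + dist p b = dist a b := dist_add_of_mem_geodesic hG hpG
    set U : Set unitInterval := {t | dist a (γ t) < dist a p + dist p (γ t)} with hU
    set V : Set unitInterval := {t | dist a (γ t) = dist a p + dist p (γ t)} with hV
    have hγc : Continuous fun t : unitInterval => γ t := γ.continuous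
    have hUopen : IsOpen U := by
      apply isOpen_lt
      · exact (continuous_const.dist hγc)
      · exact continuous_const.add (continuous_const.dist hγc)
    have hVopen : IsOpen V := by
      rw [isOpen_iff_mem_nhds]
      intro t ht
      have hne : p ≠ γ t := fun h => (hγ t) (by simp [← h])
      have hpt : (0:ℝ) < dist p (γ t) := dist_pos.mpr hne
      set W : Set unitInterval := {s | dist (γ s) (γ t) < dist p (γ t)} with hW
      have hWopen : IsOpen W := isOpen_lt (hγc.dist continuous_const) continuous_const
      have htW : t ∈ W := by
        show dist (γ t) (γ t) < dist p (γ t)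
        rw [dist_self]; exact hpt
      have hWV : W ⊆ V := by
        intro s hs
        rcases lt_or_eq_of_le (dist_triangle a p (γ s)) with hlt | heq
        · exfalso
          have hsW : dist (γ s) (γ t) < dist p (γ t) := hs
          have hyz : dist (γ s) (γ t) < dist (γ s) p + dist p (γ t) := by
            have := dist_nonneg (x := γ s) (y := p)
            linarith
          have := between_trans hgeo hdeg hlt hyz
          have htV : dist a (γ t) = dist a p + dist p (γ t) := ht
          linarith
        · exact heq
      exact Filter.mem_of_superset (hWopen.mem_nhds htW) hWV
    have h0U : (0 : unitInterval) ∈ U := by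
      show dist a (γ 0) < dist a p + dist p (γ 0)
      rw [γ.source, dist_self]
      have : (0:ℝ) < dist a p := dist_pos.mpr (Ne.symm hpa)
      have := dist_nonneg (x := p) (y := a)
      linarith
    have h1V : (1 : unitInterval) ∈ V := by
      show dist a (γ 1) = dist a p + dist p (γ 1)
      rw [γ.target]
      exact hab.symm
    have hcover : ∀ t : unitInterval, t ∈ U ∪ V := by
      intro t
      rcases lt_or_eq_of_le (dist_triangle a p (γ t)) with hlt | heq
      · exact Or.inl hlt
      · exact Or.inr heq
    obtain ⟨t, -, htU, htV⟩ :=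
      isPreconnected_univ (α := unitInterval) U V hUopen hVopen
        (fun t _ => hcover t) ⟨0, trivial, h0U⟩ ⟨1, trivial, h1V⟩
    exact absurd (htV : dist a (γ t) = dist a p + dist p (γ t))
      (ne_of_lt (htU : dist a (γ t) < dist a p + dist p (γ t)))
end

section
/- Suppose X is a geodesic metric space, and for every pair of points x, y ∈ X there is a K-bi-Lipschitz embedded path H from x to y together with a map Φ: X → H that restricts to the identity on H and is locally constant on X ∖ H (every point of X ∖ H has a neighborhood on which Φ is constant). Then any embedded topological arc in X from x to y coincides with H; in particular X is uniquely arcwise connected. -/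
open Classical in
/-- Auxiliary: a choice of inverse to `γ` on its image over `[0, L]`. -/
noncomputable def pathInv {X : Type*} [MetricSpace X] (γ : ℝ → X) (L : ℝ) (z : X) : ℝ :=
  if h : ∃ s, s ∈ Set.Icc (0:ℝ) L ∧ γ s = z then h.choose else 0

theorem pathInv_spec {X : Type*} [MetricSpace X] (γ : ℝ → X) (L : ℝ) (z : X)
    (h : ∃ s, s ∈ Set.Icc (0:ℝ) L ∧ γ s = z) :
    pathInv γ L z ∈ Set.Icc (0:ℝ) L ∧ γ (pathInv γ L z) = z := by
  rw [pathInv]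
  split
  · next h' => exact h'.choose_spec
  · next h' => exact absurd h h'

/-- If `H` is a `K`-bi-Lipschitz embedded path from `x` to `y` in a geodesic metric space
`X` admitting a continuous retraction `Φ : X → H` which is the identity on `H` and
locally constant off `H`, then every embedded topological arc from `x` to `y` coincides
with `H`. -/
theorem locally_constant_retraction_unique_arc {X : Type*} [MetricSpace X]
    (hgeo : GeodesicSpace X)
    (K L : ℝ) (hK : 1 ≤ K) (hL : 0 ≤ L)
    (γ : ℝ → X)
    (hbilip : ∀ s ∈ Set.Icc (0:ℝ) L, ∀ t ∈ Set.Icc (0:ℝ) L,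
      (1 / K) * |s - t| ≤ dist (γ s) (γ t) ∧ dist (γ s) (γ t) ≤ K * |s - t|)
    (x y : X) (hx : γ 0 = x) (hy : γ L = y)
    (H : Set X) (hH : H = γ '' Set.Icc (0:ℝ) L)
    (Φ : X → X) (hΦcont : Continuous Φ) (hΦrange : ∀ z, Φ z ∈ H)
    (hΦid : ∀ z ∈ H, Φ z = z)
    (hΦlc : ∀ z ∉ H, ∃ U : Set X, IsOpen U ∧ z ∈ U ∧ ∀ w ∈ U, Φ w = Φ z) :
    ∀ A : Set X, IsArc x y A → A = H := by
  intro A hA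
  obtain ⟨f, hfc, hfinj, hf0, hf1, hAeq⟩ := hA
  have hK0 : (0:ℝ) < K := lt_of_lt_of_le one_pos hK
  -- injectivity of γ on [0, L]
  have hγinj : ∀ s ∈ Set.Icc (0:ℝ) L, ∀ t ∈ Set.Icc (0:ℝ) L, γ s = γ t → s = t := by
    intro s hs t ht h
    have h1 := (hbilip s hs t ht).1
    rw [h, dist_self] at h1
    have hKinv : 0 < 1 / K := by positivity
    have h2 : |s - t| ≤ 0 := by
      by_contra h3
      push_neg at h3
      nlinarith [mul_pos hKinv h3]
    have h3 : |s - t| = 0 := le_antisymm h2 (abs_nonneg _)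
    have := abs_eq_zero.mp h3
    linarith
  -- continuity of γ on [0, L]
  have hγlip : LipschitzOnWith K.toNNReal γ (Set.Icc 0 L) := by
    rw [lipschitzOnWith_iff_dist_le_mul]
    intro s hs t ht
    rw [Real.coe_toNNReal K hK0.le, Real.dist_eq]
    exact (hbilip s hs t ht).2
  have hγcont : ContinuousOn γ (Set.Icc 0 L) := hγlip.continuousOn
  have hHcomp : IsCompact H := hH ▸ (isCompact_Icc.image_of_continuousOn hγcont)
  have hHcl : IsClosed H := hHcomp.isClosed
  have hxH : x ∈ H := hH ▸ ⟨0, Set.left_mem_Icc.2 hL, hx⟩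
  have hyH : y ∈ H := hH ▸ ⟨L, Set.right_mem_Icc.2 hL, hy⟩
  -- Step 1: the arc lies inside H.
  have key : ∀ t ∈ Set.Icc (0:ℝ) 1, f t ∈ H := by
    by_contra hcon
    push_neg at hcon
    obtain ⟨t₀, ht₀, ht₀H⟩ := hcon
    -- last point before t₀ on H and first point after
    set Sa : Set ℝ := Set.Icc 0 t₀ ∩ f ⁻¹' H with hSa
    set Sb : Set ℝ := Set.Icc t₀ 1 ∩ f ⁻¹' H with hSb
    have hIa : Set.Icc (0:ℝ) t₀ ⊆ Set.Icc (0:ℝ) 1 := Set.Icc_subset_Icc le_rfl ht₀.2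
    have hIb : Set.Icc t₀ (1:ℝ) ⊆ Set.Icc (0:ℝ) 1 := Set.Icc_subset_Icc ht₀.1 le_rfl
    have hSacl : IsClosed Sa :=
      (hfc.mono hIa).preimage_isClosed_of_isClosed isClosed_Icc hHcl
    have hSbcl : IsClosed Sb :=
      (hfc.mono hIb).preimage_isClosed_of_isClosed isClosed_Icc hHcl
    have hSacomp : IsCompact Sa :=
      isCompact_Icc.of_isClosed_subset hSacl Set.inter_subset_left
    have hSbcomp : IsCompact Sb :=
      isCompact_Icc.of_isClosed_subset hSbcl Set.inter_subset_left
    have hSane : Sa.Nonempty := ⟨0, ⟨le_rfl, ht₀.1⟩, by simp [hf0, hxH]⟩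
    have hSbne : Sb.Nonempty := ⟨1, ⟨ht₀.2, le_rfl⟩, by simp [hf1, hyH]⟩
    set a := sSup Sa with ha
    set b := sInf Sb with hb
    have haSa : a ∈ Sa := hSacomp.sSup_mem hSane
    have hbSb : b ∈ Sb := hSbcomp.sInf_mem hSbne
    have hat : a < t₀ := lt_of_le_of_ne haSa.1.2 (fun h => ht₀H (h ▸ haSa.2))
    have htb : t₀ < b := lt_of_le_of_ne hbSb.1.1 (fun h => ht₀H (by rw [h]; exact hbSb.2))
    have hIoo : Set.Ioo a b ⊆ Set.Icc (0:ℝ) 1 := fun s hs =>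
      ⟨haSa.1.1.trans hs.1.le, hs.2.le.trans hbSb.1.2⟩
    -- no point of (a,b) maps into H
    have hgap : ∀ s ∈ Set.Ioo a b, f s ∉ H := by
      intro s hs hsH
      rcases le_or_gt s t₀ with h | h
      · have : s ∈ Sa := ⟨⟨haSa.1.1.trans hs.1.le, h⟩, hsH⟩
        exact absurd (le_csSup hSacomp.bddAbove this) (not_le.2 hs.1)
      · have : s ∈ Sb := ⟨⟨h.le, hs.2.le.trans hbSb.1.2⟩, hsH⟩
        exact absurd (csInf_le hSbcomp.bddBelow this) (not_le.2 hs.2)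
    -- Φ ∘ f is locally constant on (a, b)
    set g : ℝ → X := fun s => Φ (f s) with hg
    have hloc : ∀ s ∈ Set.Ioo a b, ∀ᶠ s' in nhds s, g s' = g s := by
      intro s hs
      obtain ⟨U, hUo, hUm, hUc⟩ := hΦlc (f s) (hgap s hs)
      have hs01 : s ∈ Set.Ioo (0:ℝ) 1 :=
        ⟨lt_of_le_of_lt haSa.1.1 hs.1, lt_of_lt_of_le hs.2 hbSb.1.2⟩
      have hca : ContinuousAt f s :=
        hfc.continuousAt (Icc_mem_nhds hs01.1 hs01.2)
      have : f ⁻¹' U ∈ nhds s := hca.preimage_mem_nhds (hUo.mem_nhds hUm)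
      filter_upwards [this] with s' hs'
      exact hUc (f s') hs'
    -- hence constant on (a, b), equal to g t₀
    set u : Set ℝ := {s | s ∈ Set.Ioo a b ∧ g s = g t₀} with hu
    set v : Set ℝ := {s | s ∈ Set.Ioo a b ∧ g s ≠ g t₀} with hv
    have huo : IsOpen u := by
      rw [isOpen_iff_mem_nhds]
      intro s hs
      filter_upwards [hloc s hs.1, isOpen_Ioo.mem_nhds hs.1] with s' h1 h2
      exact ⟨h2, h1.trans hs.2⟩
    have hvo : IsOpen v := by
      rw [isOpen_iff_mem_nhds]
      intro s hs
      filter_upwards [hloc s hs.1, isOpen_Ioo.mem_nhds hs.1] with s' h1 h2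
      exact ⟨h2, h1 ▸ hs.2⟩
    have hconst : Set.Ioo a b ⊆ u := by
      refine IsPreconnected.subset_left_of_subset_union huo hvo ?_ ?_ ?_ isPreconnected_Ioo
      · rw [Set.disjoint_iff]
        rintro s ⟨h1, h2⟩
        exact absurd h1.2 h2.2
      · intro s hs
        by_cases h : g s = g t₀
        · exact Or.inl ⟨hs, h⟩
        · exact Or.inr ⟨hs, h⟩
      · exact ⟨t₀, ⟨hat, htb⟩, ⟨hat, htb⟩, rfl⟩
    -- take limits at a and b
    have hglim : ∀ c ∈ Set.Icc (0:ℝ) 1, Filter.NeBot (nhdsWithin c (Set.Ioo a b)) →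
        g c = g t₀ := by
      intro c hc hne
      have hcw : ContinuousWithinAt g (Set.Ioo a b) c :=
        ((hΦcont.comp_continuousOn hfc).continuousWithinAt hc).mono hIoo
      have h1 : Filter.Tendsto g (nhdsWithin c (Set.Ioo a b)) (nhds (g c)) := hcw
      have h2 : Filter.Tendsto g (nhdsWithin c (Set.Ioo a b)) (nhds (g t₀)) := by
        refine Filter.Tendsto.congr' ?_ tendsto_const_nhds
        filter_upwards [self_mem_nhdsWithin] with s hs
        exact (hconst hs).2.symm
      exact tendsto_nhds_unique h1 h2
    have hab : a < b := hat.trans htb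
    have hneA : Filter.NeBot (nhdsWithin a (Set.Ioo a b)) := by
      rw [← mem_closure_iff_nhdsWithin_neBot, closure_Ioo hab.ne]
      exact ⟨le_rfl, hab.le⟩
    have hneB : Filter.NeBot (nhdsWithin b (Set.Ioo a b)) := by
      rw [← mem_closure_iff_nhdsWithin_neBot, closure_Ioo hab.ne]
      exact ⟨hab.le, le_rfl⟩
    have hga : g a = g t₀ := hglim a (hIa haSa.1) hneA
    have hgb : g b = g t₀ := hglim b (hIb hbSb.1) hneB
    have hfa : f a = f b := by
      have h1 : Φ (f a) = f a := hΦid _ haSa.2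
      have h2 : Φ (f b) = f b := hΦid _ hbSb.2
      rw [← h1, ← h2]
      exact hga.trans hgb.symm
    have : a = b := hfinj (hIa haSa.1) (hIb hbSb.1) hfa
    linarith [hat.trans htb]
  -- Step 2: H is inside the arc.
  -- The inverse of γ is Lipschitz on H, so p = γ⁻¹ ∘ f is continuous; IVT finishes.
  have hqspec : ∀ z ∈ H, pathInv γ L z ∈ Set.Icc (0:ℝ) L ∧ γ (pathInv γ L z) = z := by
    intro z hz
    rw [hH] at hz
    obtain ⟨s, hs, hsz⟩ := hz
    exact pathInv_spec γ L z ⟨s, hs, hsz⟩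
  have hqlip : LipschitzOnWith K.toNNReal (pathInv γ L) H := by
    rw [lipschitzOnWith_iff_dist_le_mul]
    intro z hz w hw
    obtain ⟨hz1, hz2⟩ := hqspec z hz
    obtain ⟨hw1, hw2⟩ := hqspec w hw
    have h1 := (hbilip _ hz1 _ hw1).1
    rw [hz2, hw2] at h1
    rw [Real.coe_toNNReal K hK0.le, Real.dist_eq]
    calc |pathInv γ L z - pathInv γ L w| = K * ((1/K) * |pathInv γ L z - pathInv γ L w|) := by
          field_simp
      _ ≤ K * dist z w := by nlinarith
  set p : ℝ → ℝ := fun t => pathInv γ L (f t) with hp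
  have hpc : ContinuousOn p (Set.Icc 0 1) :=
    hqlip.continuousOn.comp hfc key
  have hp0 : p 0 = 0 := by
    have h := hqspec x hxH
    have := hγinj _ h.1 0 (Set.left_mem_Icc.2 hL) (h.2.trans hx.symm)
    simpa [hp, hf0] using this
  have hp1 : p 1 = L := by
    have h := hqspec y hyH
    have := hγinj _ h.1 L (Set.right_mem_Icc.2 hL) (h.2.trans hy.symm)
    simpa [hp, hf1] using this
  have hsurj : Set.Icc (0:ℝ) L ⊆ p '' Set.Icc 0 1 := by
    have := intermediate_value_Icc (zero_le_one) hpc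
    rw [hp0, hp1] at this
    exact this
  apply Set.Subset.antisymm
  · rw [hAeq]
    rintro _ ⟨t, ht, rfl⟩
    exact key t ht
  · rw [hH, hAeq]
    rintro _ ⟨s, hs, rfl⟩
    obtain ⟨t, ht, hpt⟩ := hsurj hs
    refine ⟨t, ht, ?_⟩
    have hfH := key t ht
    have h := hqspec (f t) hfH
    rw [← h.2]
    congr 1
end
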